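/- arXiv:math/0401201 — 2 statements merged into one kernel-verified Lean document; each statement's English description precedes it below -/
import Mathlib

section
/- Let d and n be positive integers with d dividing n, k an odd positive integer, and a_0, ..., a_{k−1} integers with a_0 + a_1 + ... + a_{k−1} = n (indices modulo k), such that a_j + a_{j+1} ≡ 0 (mod d) for all j. Then d divides a_j for all j. -/
theorem branches_general_d (n d : ℤ) (hn : 0 < n) (hd : 0 < d) (hdvd : d ∣ n)
    (k : ℕ) (hk : 0 < k) (hkodd : Odd k)
    (a : ℕ → ℤ) (hper : ∀ j : ℕ, a (j + k) = a j)
    (hsum : ∑ j ∈ Finset.range k, a j = n)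
    (h : ∀ j : ℕ, d ∣ a j + a (j + 1)) :
    ∀ j : ℕ, d ∣ a j := by
  have halt : ∀ j : ℕ, d ∣ a j - (-1 : ℤ) ^ j * a 0 := by
    intro j
    induction j with
    | zero => simp
    | succ j ih =>
      have : a (j + 1) - (-1 : ℤ) ^ (j + 1) * a 0
          = (a j + a (j + 1)) - (a j - (-1 : ℤ) ^ j * a 0) := by ring
      rw [this]
      exact dvd_sub (h j) ih
  have hsum' : d ∣ n - a 0 := by
    have : d ∣ ∑ j ∈ Finset.range k, (a j - (-1 : ℤ) ^ j * a 0) :=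
      Finset.dvd_sum (fun j _ => halt j)
    rw [Finset.sum_sub_distrib, hsum, ← Finset.sum_mul, neg_one_geom_sum,
      if_neg (Nat.not_even_iff_odd.mpr hkodd)] at this
    simpa using this
  have h0 : d ∣ a 0 := by
    have := dvd_sub hdvd hsum'
    simpa using this
  intro j
  induction j with
  | zero => exact h0
  | succ j ih =>
    have : a (j + 1) = (a j + a (j + 1)) - a j := by ring
    rw [this]
    exact dvd_sub (h j) ih
end

section
/- Let n be a positive integer and let σ be the 2n-cycle (0 1 ... 2n−1) on ℤ/2n, and φ a fixed-point-free involution of ℤ/2n. Let d divide n. Then the partition of ℤ/2n into the 2d residue classes modulo 2d is an imprimitivity system (block system) for the group generated by σ and φ if and only if φ(i + 2d) ≡ φ(i) (mod 2d) for all i. -/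
/-!
Preserving the fibres of a map is stable under composition, so the whole group generated by
`σ` and `φ` preserves the residue classes mod `2d` as soon as `σ`, `φ` and their inverses do.
`σ^{±1}` are translations and `φ⁻¹ = φ`; and since two points of `ZMod (2n)` lie in the same
class exactly when they differ by an integer multiple of `2d`, `φ` preserves the classes iff
`φ` composed with the reduction mod `2d` is `2d`-periodic.
-/

open Equiv Function

section FiberPreserving

variable {α β : Type*}

def fiberPreservingSubmonoid (f : α → β) : Submonoid (Perm α) where
  carrier := {g | ∀ x y, f x = f y → f (g x) = f (g y)}
  one_mem' _ _ h := h
  mul_mem' hg hh _ _ hxy := hg _ _ (hh _ _ hxy)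

theorem mem_fiberPreservingSubmonoid_of_periodic {A : Type*} [AddGroup A] {π : A → β} {m : A}
    (hπ : ∀ x y, π x = π y → ∃ k : ℤ, x = y + k • m) {g : Perm A}
    (hg : Periodic (π ∘ g) m) :
    g ∈ fiberPreservingSubmonoid π := by
  intro x y hxy
  obtain ⟨k, rfl⟩ := hπ x y hxy
  exact hg.zsmul k y

theorem addRight_mem_fiberPreservingSubmonoid {A B F : Type*} [AddGroup A] [Add B]
    [FunLike F A B] [AddHomClass F A B] (π : F) (c : A) :
    Equiv.addRight c ∈ fiberPreservingSubmonoid π := by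
  intro x y hxy
  simp only [coe_addRight, map_add, hxy]

end FiberPreserving

theorem Subgroup.closure_toSubmonoid_le {G : Type*} [Group G] {s : Set G} {M : Submonoid G}
    (h : ∀ g ∈ s, g ∈ M ∧ g⁻¹ ∈ M) : (closure s).toSubmonoid ≤ M := by
  rw [closure_toSubmonoid, Submonoid.closure_le]
  rintro g (hg | hg)
  exacts [(h g hg).1, inv_inv g ▸ (h _ hg).2]

theorem ZMod.exists_eq_add_zsmul_of_castHom_eq {m n : ℕ} (h : m ∣ n) {x y : ZMod n}
    (hxy : castHom h (ZMod m) x = castHom h (ZMod m) y) :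
    ∃ k : ℤ, x = y + k • (m : ZMod n) := by
  set z : ℤ := cast (x - y)
  have hz : (z : ZMod m) = 0 := by
    rw [← cast_intCast h, intCast_zmod_cast, ← castHom_apply (h := h), map_sub, hxy, sub_self]
  obtain ⟨k, hk⟩ := (intCast_zmod_eq_zero_iff_dvd z m).mp hz
  refine ⟨k, ?_⟩
  rw [← sub_eq_iff_eq_add', ← intCast_zmod_cast (x - y), zsmul_eq_mul]
  change ((z : ℤ) : ZMod n) = _
  rw [hk]
  push_cast
  ring

theorem imprimitivity_criterion_general (n d : ℕ) (hdvd : d ∣ n)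
    (σ φ : Equiv.Perm (ZMod (2 * n)))
    (hσ : ∀ x : ZMod (2 * n), σ x = x + 1)
    (hinv : ∀ x : ZMod (2 * n), φ (φ x) = x) :
    (∀ g ∈ Subgroup.closure ({σ, φ} : Set (Equiv.Perm (ZMod (2 * n)))),
        ∀ x y : ZMod (2 * n),
          ZMod.castHom (mul_dvd_mul_left 2 hdvd) (ZMod (2 * d)) x =
            ZMod.castHom (mul_dvd_mul_left 2 hdvd) (ZMod (2 * d)) y →
          ZMod.castHom (mul_dvd_mul_left 2 hdvd) (ZMod (2 * d)) (g x) =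
            ZMod.castHom (mul_dvd_mul_left 2 hdvd) (ZMod (2 * d)) (g y)) ↔
    (∀ i : ZMod (2 * n),
        ZMod.castHom (mul_dvd_mul_left 2 hdvd) (ZMod (2 * d)) (φ (i + (2 * d : ℕ))) =
          ZMod.castHom (mul_dvd_mul_left 2 hdvd) (ZMod (2 * d)) (φ i)) := by
  set π := ZMod.castHom (mul_dvd_mul_left 2 hdvd) (ZMod (2 * d))
  constructor
  · intro H i
    refine H φ (Subgroup.subset_closure (by simp)) _ _ ?_
    rw [map_add, map_natCast, ZMod.natCast_self, add_zero]
  · intro hφ g hg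
    have hσ_eq : σ = Equiv.addRight 1 := Equiv.ext hσ
    have hφ_inv : φ⁻¹ = φ := (eq_inv_of_mul_eq_one_left (Equiv.ext hinv)).symm
    have hφ_mem : φ ∈ fiberPreservingSubmonoid π :=
      mem_fiberPreservingSubmonoid_of_periodic
        (fun _ _ => ZMod.exists_eq_add_zsmul_of_castHom_eq _) hφ
    refine Subgroup.closure_toSubmonoid_le (M := fiberPreservingSubmonoid π) ?_ hg
    rintro g (rfl | rfl)
    · rw [hσ_eq, Equiv.neg_addRight]
      exact ⟨addRight_mem_fiberPreservingSubmonoid π 1,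
        addRight_mem_fiberPreservingSubmonoid π (-1)⟩
    · exact ⟨hφ_mem, hφ_inv ▸ hφ_mem⟩

theorem imprimitivity_criterion (n d : ℕ) (hn : 0 < n) (hd : 0 < d) (hdvd : d ∣ n)
    (σ φ : Equiv.Perm (ZMod (2 * n)))
    (hσ : ∀ x : ZMod (2 * n), σ x = x + 1)
    (hinv : ∀ x : ZMod (2 * n), φ (φ x) = x)
    (hfpf : ∀ x : ZMod (2 * n), φ x ≠ x) :
    (∀ g ∈ Subgroup.closure ({σ, φ} : Set (Equiv.Perm (ZMod (2 * n)))),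
        ∀ x y : ZMod (2 * n),
          ZMod.castHom (mul_dvd_mul_left 2 hdvd) (ZMod (2 * d)) x =
            ZMod.castHom (mul_dvd_mul_left 2 hdvd) (ZMod (2 * d)) y →
          ZMod.castHom (mul_dvd_mul_left 2 hdvd) (ZMod (2 * d)) (g x) =
            ZMod.castHom (mul_dvd_mul_left 2 hdvd) (ZMod (2 * d)) (g y)) ↔
    (∀ i : ZMod (2 * n),
        ZMod.castHom (mul_dvd_mul_left 2 hdvd) (ZMod (2 * d)) (φ (i + (2 * d : ℕ))) =
          ZMod.castHom (mul_dvd_mul_left 2 hdvd) (ZMod (2 * d)) (φ i)) :=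
  imprimitivity_criterion_general n d hdvd σ φ hσ hinv
end
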